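/- arXiv:1609.02483 — 4 statements merged into one kernel-verified Lean document; each statement's English description precedes it below -/
import Mathlib

section
/- Let q be a nonzero complex number and define the following 7×7 complex matrices (E_ij denotes the matrix unit with 1 in row i, column j): Kα = diag(q, q⁻¹, q², 1, q⁻², q, q⁻¹), Kβ = diag(1, q³, q⁻³, 1, q³, q⁻³, 1), Eα = E₁₂+E₃₄+E₄₅+E₆₇, Fα = E₂₁+(q+q⁻¹)E₄₃+(q+q⁻¹)E₅₄+E₇₆, Eβ = E₂₃+E₅₆, Fβ = E₃₂+E₆₅. Then all of the following hold: KαKβ = KβKα; Kα·Eα·Kα⁻¹ = q²·Eα; Kα·Eβ·Kα⁻¹ = q⁻³·Eβ; Kβ·Eα·Kβ⁻¹ = q⁻³·Eα; Kβ·Eβ·Kβ⁻¹ = q⁶·Eβ; Kα·Fα·Kα⁻¹ = q⁻²·Fα; Kα·Fβ·Kα⁻¹ = q³·Fβ; Kβ·Fα·Kβ⁻¹ = q³·Fα; Kβ·Fβ·Kβ⁻¹ = q⁻⁶·Fβ; Eα·Fβ = Fβ·Eα; Eβ·Fα = Fα·Eβ; (q−q⁻¹)(EαFα − FαEα) = Kα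 − Kα⁻¹; (q³−q⁻³)(EβFβ − FβEβ) = Kβ − Kβ⁻¹; the q-Serre relations Eα⁴Eβ − [4]_q·Eα³EβEα + [3]_q(q²+q⁻²)·Eα²EβEα² − [4]_q·EαEβEα³ + EβEα⁴ = 0 and Eβ²Eα − (q³+q⁻³)·EβEαEβ + EαEβ² = 0 hold, and the same two q-Serre relations hold with (Eα,Eβ) replaced by (Fα,Fβ). (Hence this assignment defines a representation of the quantized universal enveloping algebra U_q(g₂) on ℂ⁷, the minimal representation.) -/
/-!
Write `K = diagonal d` for `Kα` or `Kβ`. Each matrix unit `E_ij` satisfies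
`K E_ij = (d i / d j) E_ij K`, and in each of `Eα, Eβ, Fα, Fβ` all matrix units share the same
ratio `d i / d j`; this gives the conjugation relations. The commutators `[Eα, Fα]` and
`[Eβ, Fβ]` are diagonal, so the Cartan relations are checked entry by entry. The Serre relations
hold term by term: the weight strings of the representation are short, so `Eα ^ 3`,
`Eα ^ 2 Eβ Eα ^ 2`, `Eβ ^ 2` and `Eβ Eα Eβ` already vanish, and likewise for `Fα, Fβ`.
-/

open Matrix

noncomputable section

namespace Stmt0

/-- Image of `q^{hα}`. -/
def Kα (q : ℂ) : Matrix (Fin 7) (Fin 7) ℂ :=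
  diagonal ![q, q⁻¹, q ^ 2, 1, q⁻¹ ^ 2, q, q⁻¹]

/-- Image of `q^{hβ}`. -/
def Kβ (q : ℂ) : Matrix (Fin 7) (Fin 7) ℂ :=
  diagonal ![1, q ^ 3, q⁻¹ ^ 3, 1, q ^ 3, q⁻¹ ^ 3, 1]

/-- Image of `e_α`. -/
def Eα : Matrix (Fin 7) (Fin 7) ℂ :=
  Matrix.single 0 1 1 + Matrix.single 2 3 1 + Matrix.single 3 4 1 + Matrix.single 5 6 1

/-- Image of `f_α`. -/
def Fα (q : ℂ) : Matrix (Fin 7) (Fin 7) ℂ :=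
  Matrix.single 1 0 1 + Matrix.single 3 2 (q + q⁻¹) + Matrix.single 4 3 (q + q⁻¹) +
    Matrix.single 6 5 1

/-- Image of `e_β`. -/
def Eβ : Matrix (Fin 7) (Fin 7) ℂ :=
  Matrix.single 1 2 1 + Matrix.single 4 5 1

/-- Image of `f_β`. -/
def Fβ : Matrix (Fin 7) (Fin 7) ℂ :=
  Matrix.single 2 1 1 + Matrix.single 5 4 1

section AdEigenvector

variable {n R : Type*} [Fintype n] [DecidableEq n]

theorem inv_diagonal_of_ne_zero {K : Type*} [Field K] {d : n → K} (hd : ∀ i, d i ≠ 0) :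
    (diagonal d)⁻¹ = diagonal d⁻¹ := by
  refine Matrix.inv_eq_right_inv ?_
  rw [diagonal_mul_diagonal, ← diagonal_one]
  congr 1
  ext i
  exact mul_inv_cancel₀ (hd i)

variable [CommRing R]

/-- `K * X * K⁻¹ = c • X`, stated without inverting `K`. -/
def IsAdEigenvector (K X : Matrix n n R) (c : R) : Prop :=
  K * X = c • (X * K)

theorem IsAdEigenvector.add {K X Y : Matrix n n R} {c : R} (hX : IsAdEigenvector K X c)
    (hY : IsAdEigenvector K Y c) : IsAdEigenvector K (X + Y) c := by
  rw [IsAdEigenvector, mul_add, add_mul, smul_add, hX, hY]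

theorem isAdEigenvector_diagonal_single {d : n → R} {i j : n} {c : R} (h : d i = c * d j)
    (x : R) : IsAdEigenvector (diagonal d) (single i j x) c := by
  ext a b
  simp only [Matrix.smul_apply, diagonal_mul, mul_diagonal, single_apply, smul_eq_mul]
  split_ifs with hab
  · rw [← hab.1, ← hab.2, h]
    ring
  · simp

theorem IsAdEigenvector.mul_mul_inv_eq {K X : Matrix n n R} {c : R} (h : IsAdEigenvector K X c)
    (hK : IsUnit K) : K * X * K⁻¹ = c • X := by
  rw [h, Matrix.smul_mul, mul_nonsing_inv_cancel_right _ _ ((isUnit_iff_isUnit_det K).mp hK)]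

end AdEigenvector

section Serre

variable {R A : Type*} [Semiring R] [Ring A] [Module R A] {a b : A}

theorem serre_four_eq_zero (ha : a ^ 3 = 0) (hab : a ^ 2 * b * a ^ 2 = 0) (c₁ c₂ c₃ : R) :
    a ^ 4 * b - c₁ • (a ^ 3 * b * a) + c₂ • (a ^ 2 * b * a ^ 2) - c₃ • (a * b * a ^ 3)
      + b * a ^ 4 = 0 := by
  have ha4 : a ^ 4 = 0 := by rw [pow_succ, ha, zero_mul]
  simp [ha, ha4, hab]

theorem serre_two_eq_zero (hb : b ^ 2 = 0) (hbab : b * a * b = 0) (c : R) :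
    b ^ 2 * a - c • (b * a * b) + a * b ^ 2 = 0 := by
  simp [hb, hbab]

end Serre

variable {q : ℂ}

theorem Kα_mul_Kβ_comm : Kα q * Kβ q = Kβ q * Kα q :=
  (commute_diagonal _ _).eq

theorem isUnit_Kα (hq : q ≠ 0) : IsUnit (Kα q) := by
  simp [Kα, Pi.isUnit_iff, Fin.forall_fin_succ, hq]

theorem isUnit_Kβ (hq : q ≠ 0) : IsUnit (Kβ q) := by
  simp [Kβ, Pi.isUnit_iff, Fin.forall_fin_succ, hq]

theorem isAdEigenvector_Kα (hq : q ≠ 0) :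
    IsAdEigenvector (Kα q) Eα (q ^ 2) ∧ IsAdEigenvector (Kα q) Eβ (q⁻¹ ^ 3) ∧
      IsAdEigenvector (Kα q) (Fα q) (q⁻¹ ^ 2) ∧ IsAdEigenvector (Kα q) Fβ (q ^ 3) := by
  refine ⟨?_, ?_, ?_, ?_⟩ <;> simp only [Kα, Eα, Eβ, Fα, Fβ] <;>
    repeat' with_reducible apply IsAdEigenvector.add
  all_goals exact isAdEigenvector_diagonal_single (by simp [field]) _

theorem isAdEigenvector_Kβ (hq : q ≠ 0) :
    IsAdEigenvector (Kβ q) Eα (q⁻¹ ^ 3) ∧ IsAdEigenvector (Kβ q) Eβ (q ^ 6) ∧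
      IsAdEigenvector (Kβ q) (Fα q) (q ^ 3) ∧ IsAdEigenvector (Kβ q) Fβ (q⁻¹ ^ 6) := by
  refine ⟨?_, ?_, ?_, ?_⟩ <;> simp only [Kβ, Eα, Eβ, Fα, Fβ] <;>
    repeat' with_reducible apply IsAdEigenvector.add
  all_goals exact isAdEigenvector_diagonal_single (by simp [field]) _

theorem Eα_mul_Fβ_comm : Eα * Fβ = Fβ * Eα := by
  simp [Eα, Fβ, mul_add, add_mul]

theorem Eβ_mul_Fα_comm : Eβ * Fα q = Fα q * Eβ := by
  simp [Eβ, Fα, mul_add, add_mul]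

theorem Eα_mul_Fα_sub_Fα_mul_Eα :
    Eα * Fα q - Fα q * Eα = diagonal ![1, -1, q + q⁻¹, 0, -(q + q⁻¹), 1, -1] := by
  ext i j
  fin_cases i <;> fin_cases j <;> simp [Eα, Fα, mul_apply, single_apply]

theorem Eβ_mul_Fβ_sub_Fβ_mul_Eβ : Eβ * Fβ - Fβ * Eβ = diagonal ![0, 1, -1, 0, 1, -1, 0] := by
  ext i j
  fin_cases i <;> fin_cases j <;> simp [Eβ, Fβ, mul_apply, single_apply]

theorem cartan_α (hq : q ≠ 0) : (q - q⁻¹) • (Eα * Fα q - Fα q * Eα) = Kα q - (Kα q)⁻¹ := by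
  rw [Eα_mul_Fα_sub_Fα_mul_Eα, Kα, inv_diagonal_of_ne_zero (by simp [Fin.forall_fin_succ, hq]),
    ← diagonal_smul, diagonal_sub]
  congr 1
  ext i
  fin_cases i <;> simp [field] <;> ring

theorem cartan_β (hq : q ≠ 0) : (q ^ 3 - q⁻¹ ^ 3) • (Eβ * Fβ - Fβ * Eβ) = Kβ q - (Kβ q)⁻¹ := by
  rw [Eβ_mul_Fβ_sub_Fβ_mul_Eβ, Kβ, inv_diagonal_of_ne_zero (by simp [Fin.forall_fin_succ, hq]),
    ← diagonal_smul, diagonal_sub]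
  congr 1
  ext i
  fin_cases i <;> simp [field]

theorem Eα_pow_three : Eα ^ 3 = 0 := by
  simp [pow_succ, Eα, mul_add, add_mul]

theorem Eα_sq_mul_Eβ_mul_Eα_sq : Eα ^ 2 * Eβ * Eα ^ 2 = 0 := by
  simp [pow_succ, Eα, Eβ, mul_add, add_mul]

theorem Eβ_sq : Eβ ^ 2 = 0 := by
  simp [pow_succ, Eβ, mul_add, add_mul]

theorem Eβ_mul_Eα_mul_Eβ : Eβ * Eα * Eβ = 0 := by
  simp [Eα, Eβ, mul_add, add_mul]

theorem Fα_pow_three : Fα q ^ 3 = 0 := by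
  simp [pow_succ, Fα, mul_add, add_mul]

theorem Fα_sq_mul_Fβ_mul_Fα_sq : Fα q ^ 2 * Fβ * Fα q ^ 2 = 0 := by
  simp [pow_succ, Fα, Fβ, mul_add, add_mul]

theorem Fβ_sq : Fβ ^ 2 = 0 := by
  simp [pow_succ, Fβ, mul_add, add_mul]

theorem Fβ_mul_Fα_mul_Fβ : Fβ * Fα q * Fβ = 0 := by
  simp [Fα, Fβ, mul_add, add_mul]

theorem minimal_representation (q : ℂ) (hq : q ≠ 0) :
    Kα q * Kβ q = Kβ q * Kα q ∧
    Kα q * Eα * (Kα q)⁻¹ = q ^ 2 • Eα ∧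
    Kα q * Eβ * (Kα q)⁻¹ = q⁻¹ ^ 3 • Eβ ∧
    Kβ q * Eα * (Kβ q)⁻¹ = q⁻¹ ^ 3 • Eα ∧
    Kβ q * Eβ * (Kβ q)⁻¹ = q ^ 6 • Eβ ∧
    Kα q * Fα q * (Kα q)⁻¹ = q⁻¹ ^ 2 • Fα q ∧
    Kα q * Fβ * (Kα q)⁻¹ = q ^ 3 • Fβ ∧
    Kβ q * Fα q * (Kβ q)⁻¹ = q ^ 3 • Fα q ∧
    Kβ q * Fβ * (Kβ q)⁻¹ = q⁻¹ ^ 6 • Fβ ∧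
    Eα * Fβ = Fβ * Eα ∧
    Eβ * Fα q = Fα q * Eβ ∧
    (q - q⁻¹) • (Eα * Fα q - Fα q * Eα) = Kα q - (Kα q)⁻¹ ∧
    (q ^ 3 - q⁻¹ ^ 3) • (Eβ * Fβ - Fβ * Eβ) = Kβ q - (Kβ q)⁻¹ ∧
    Eα ^ 4 * Eβ - (q ^ 3 + q + q⁻¹ + q⁻¹ ^ 3) • (Eα ^ 3 * Eβ * Eα)
      + ((q ^ 2 + 1 + q⁻¹ ^ 2) * (q ^ 2 + q⁻¹ ^ 2)) • (Eα ^ 2 * Eβ * Eα ^ 2)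
      - (q ^ 3 + q + q⁻¹ + q⁻¹ ^ 3) • (Eα * Eβ * Eα ^ 3) + Eβ * Eα ^ 4 = 0 ∧
    Eβ ^ 2 * Eα - (q ^ 3 + q⁻¹ ^ 3) • (Eβ * Eα * Eβ) + Eα * Eβ ^ 2 = 0 ∧
    Fα q ^ 4 * Fβ - (q ^ 3 + q + q⁻¹ + q⁻¹ ^ 3) • (Fα q ^ 3 * Fβ * Fα q)
      + ((q ^ 2 + 1 + q⁻¹ ^ 2) * (q ^ 2 + q⁻¹ ^ 2)) • (Fα q ^ 2 * Fβ * Fα q ^ 2)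
      - (q ^ 3 + q + q⁻¹ + q⁻¹ ^ 3) • (Fα q * Fβ * Fα q ^ 3) + Fβ * Fα q ^ 4 = 0 ∧
    Fβ ^ 2 * Fα q - (q ^ 3 + q⁻¹ ^ 3) • (Fβ * Fα q * Fβ) + Fα q * Fβ ^ 2 = 0 := by
  obtain ⟨hαEα, hαEβ, hαFα, hαFβ⟩ := isAdEigenvector_Kα hq
  obtain ⟨hβEα, hβEβ, hβFα, hβFβ⟩ := isAdEigenvector_Kβ hq
  have hKα := isUnit_Kα hq
  have hKβ := isUnit_Kβ hq
  exact ⟨Kα_mul_Kβ_comm,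
    hαEα.mul_mul_inv_eq hKα, hαEβ.mul_mul_inv_eq hKα,
    hβEα.mul_mul_inv_eq hKβ, hβEβ.mul_mul_inv_eq hKβ,
    hαFα.mul_mul_inv_eq hKα, hαFβ.mul_mul_inv_eq hKα,
    hβFα.mul_mul_inv_eq hKβ, hβFβ.mul_mul_inv_eq hKβ,
    Eα_mul_Fβ_comm, Eβ_mul_Fα_comm, cartan_α hq, cartan_β hq,
    serre_four_eq_zero Eα_pow_three Eα_sq_mul_Eβ_mul_Eα_sq _ _ _,
    serre_two_eq_zero Eβ_sq Eβ_mul_Eα_mul_Eβ _,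
    serre_four_eq_zero Fα_pow_three Fα_sq_mul_Fβ_mul_Fα_sq _ _ _,
    serre_two_eq_zero Fβ_sq Fβ_mul_Fα_mul_Fβ _⟩

end Stmt0
end
end

section
/- Let q ∈ ℂ be nonzero and not a root of unity, and let U⁻, J and the elements f_ij be as in the context. Then in the quotient algebra U⁻/J the following hold for the images under the quotient map π: π(f₂₄) = (q⁻³−q³)·ba, π(f₅₇) = (q⁻³−q³)·ba, π(f₃₅) = ((q⁻²−1)/(q+q⁻¹))·a², π(f₂₅) = ((q⁻³−q)(q⁻³−q³)/(q+q⁻¹)²)·ba², and π(f₁₃) = π(f₄₆) = π(f₁₄) = π(f₄₇) = π(f₁₅) = π(f₂₆) = π(f₃₆) = π(f₃₇) = π(f₁₆) = π(f₂₇) = π(f₁₇) = 0. -/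
noncomputable section

namespace G2Shapovalov

/-- The free associative unital `ℂ`-algebra on two generators `a = f_α`, `b = f_β`. -/
abbrev F : Type := FreeAlgebra ℂ (Fin 2)

/-- The free generator `a = f_α`. -/
def A : F := FreeAlgebra.ι ℂ 0

/-- The free generator `b = f_β`. -/
def B : F := FreeAlgebra.ι ℂ 1

/-- The two q-Serre relations of `U_q(g₂)⁻`. -/
inductive SerreRel (q : ℂ) : F → F → Prop
  | serre₁ : SerreRel q
      (A ^ 4 * B - (q ^ 3 + q + q⁻¹ + q⁻¹ ^ 3) • (A ^ 3 * B * A)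
        + ((q ^ 2 + 1 + q⁻¹ ^ 2) * (q ^ 2 + q⁻¹ ^ 2)) • (A ^ 2 * B * A ^ 2)
        - (q ^ 3 + q + q⁻¹ + q⁻¹ ^ 3) • (A * B * A ^ 3) + B * A ^ 4) 0
  | serre₂ : SerreRel q (B ^ 2 * A - (q ^ 3 + q⁻¹ ^ 3) • (B * A * B) + A * B ^ 2) 0

/-- `U⁻`, the quotient of the free algebra by the two-sided ideal generated by
the q-Serre elements. -/
abbrev Um (q : ℂ) : Type := RingQuot (SerreRel q)

/-- The image of `a` in `U⁻`. -/
def a (q : ℂ) : Um q := RingQuot.mkAlgHom ℂ (SerreRel q) A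

/-- The image of `b` in `U⁻`. -/
def b (q : ℂ) : Um q := RingQuot.mkAlgHom ℂ (SerreRel q) B

/-- The deformed commutator `[x,y]_p = xy − p·yx`. -/
def br {R : Type} [Ring R] [Algebra ℂ R] (p : ℂ) (x y : R) : R := x * y - p • (y * x)

variable (q : ℂ)

/- The matrix entries of the reduced inverse Shapovalov form. -/
def f12 : Um q := a q
def f34 : Um q := a q
def f45 : Um q := a q
def f67 : Um q := a q
def f23 : Um q := (q ^ 2 + 1 + q⁻¹ ^ 2) • b q
def f56 : Um q := (q ^ 2 + 1 + q⁻¹ ^ 2) • b q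
def f13 : Um q := br (q ^ 3) (b q) (a q)
def f24 : Um q := br (q ^ 3) (a q) (b q)
def f35 : Um q := (q⁻¹ ^ 2 * (q + q⁻¹)⁻¹) • br (q ^ 2) (a q) (a q)
def f46 : Um q := br (q ^ 3) (b q) (a q)
def f57 : Um q := br (q ^ 3) (a q) (b q)
def f14 : Um q := (q⁻¹ * (q + q⁻¹)⁻¹) • br (q ^ 3) (a q) (br (q ^ 3) (b q) (a q))
def f25 : Um q := ((q + q⁻¹) ^ 2)⁻¹ • br (q ^ 3) (a q) (br q (a q) (b q))
def f36 : Um q := ((q + q⁻¹) ^ 2)⁻¹ • br (q ^ 3) (br q (b q) (a q)) (a q)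
def f47 : Um q := (q⁻¹ * (q + q⁻¹)⁻¹) • br (q ^ 3) (br (q ^ 3) (a q) (b q)) (a q)
def f15 : Um q := (q⁻¹ ^ 2 * ((q + q⁻¹) ^ 2)⁻¹) •
  br q (a q) (br (q ^ 3) (a q) (br (q ^ 3) (b q) (a q)))
def f26 : Um q := (q⁻¹ ^ 3 * ((q + q⁻¹) ^ 2)⁻¹) •
  br (q ^ 6) (b q) (br (q ^ 3) (a q) (br q (a q) (b q)))
def f37 : Um q := (q⁻¹ ^ 2 * ((q + q⁻¹) ^ 2)⁻¹) •
  br q (br (q ^ 3) (br (q ^ 3) (a q) (b q)) (a q)) (a q)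
def f16 : Um q := (q⁻¹ ^ 2 * ((q + q⁻¹) ^ 2)⁻¹) •
  br (q ^ 3) (b q) (br q (a q) (br (q ^ 3) (a q) (br (q ^ 3) (b q) (a q))))
def f27 : Um q := (q⁻¹ ^ 2 * ((q + q⁻¹) ^ 2)⁻¹) •
  br (q ^ 3) (br q (br (q ^ 3) (br (q ^ 3) (a q) (b q)) (a q)) (a q)) (b q)
def f17 : Um q := (q⁻¹ ^ 2 * ((q + q⁻¹) ^ 2)⁻¹) •
  br q (a q) (br (q ^ 3) (b q) (br q (a q) (br (q ^ 3) (a q) (br (q ^ 3) (b q) (a q)))))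

/-- The relation generating the two-sided ideal `J`: `ab = q⁻³·ba`. -/
inductive JRel (q : ℂ) : Um q → Um q → Prop
  | rel : JRel q (a q * b q) (q⁻¹ ^ 3 • (b q * a q))

/-- The quotient algebra `U⁻/J`. -/
abbrev UmJ (q : ℂ) : Type := RingQuot (JRel q)

/-- The quotient map `π : U⁻ → U⁻/J`. -/
def π : Um q →ₐ[ℂ] UmJ q := RingQuot.mkAlgHom ℂ (JRel q)

end G2Shapovalov

namespace G2Shapovalov

theorem brz1 {R : Type} [Ring R] [Algebra ℂ R] (p : ℂ) (x : R) : br p x 0 = 0 := by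
  simp [br]

theorem brz2 {R : Type} [Ring R] [Algebra ℂ R] (p : ℂ) (x : R) : br p 0 x = 0 := by
  simp [br]

section Abstract
set_option linter.unusedSectionVars false
set_option linter.unnecessarySeqFocus false
set_option linter.unreachableTactic false
set_option linter.unusedTactic false
variable {R : Type} [Ring R] [Algebra ℂ R] (q : ℂ) (hq : q ≠ 0) (c d : R)
variable (h : c * d = q⁻¹ ^ 3 • (d * c))

include h hq

theorem habx : ∀ x : R, c * (d * x) = q⁻¹ ^ 3 • (d * (c * x)) := fun x => by
  rw [← mul_assoc, h, smul_mul_assoc, mul_assoc]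

theorem t13 : br (q ^ 3) d c = 0 := by
  simp only [br, h, habx q hq c d h, smul_sub, sub_smul, smul_smul, mul_sub,
      sub_mul, smul_mul_assoc, mul_smul_comm, mul_assoc]
  all_goals match_scalars
  all_goals field_simp
  all_goals try ring
  all_goals try field_simp
  all_goals try ring

theorem t24 : br (q ^ 3) c d = (q⁻¹ ^ 3 - q ^ 3) • (d * c) := by
  simp only [br, h, habx q hq c d h, smul_sub, sub_smul, smul_smul, mul_sub,
      sub_mul, smul_mul_assoc, mul_smul_comm, mul_assoc]
  all_goals match_scalars
  all_goals field_simp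
  all_goals try ring
  all_goals try field_simp
  all_goals try ring

theorem t35 : br (q ^ 2) c c = (1 - q ^ 2) • (c * c) := by
  simp only [br, h, habx q hq c d h, smul_sub, sub_smul, smul_smul, mul_sub,
      sub_mul, smul_mul_assoc, mul_smul_comm, mul_assoc]
  all_goals match_scalars
  all_goals field_simp
  all_goals try ring
  all_goals try field_simp
  all_goals try ring

theorem t14 : br (q ^ 3) c (br (q ^ 3) d c) = 0 := by
  rw [t13 q hq c d h, brz1]

theorem t25 : br (q ^ 3) c (br q c d) = ((q⁻¹ ^ 3 - q) * (q⁻¹ ^ 3 - q ^ 3)) • (d * (c * c)) := by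
  simp only [br, h, habx q hq c d h, smul_sub, sub_smul, smul_smul, mul_sub,
      sub_mul, smul_mul_assoc, mul_smul_comm, mul_assoc]
  all_goals match_scalars
  all_goals field_simp
  all_goals try ring
  all_goals try field_simp
  all_goals try ring

theorem t36 : br (q ^ 3) (br q d c) c = 0 := by
  simp only [br, h, habx q hq c d h, smul_sub, sub_smul, smul_smul, mul_sub,
      sub_mul, smul_mul_assoc, mul_smul_comm, mul_assoc]
  all_goals match_scalars
  all_goals field_simp
  all_goals try ring
  all_goals try field_simp
  all_goals try ring

theorem t47 : br (q ^ 3) (br (q ^ 3) c d) c = 0 := by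
  simp only [br, h, habx q hq c d h, smul_sub, sub_smul, smul_smul, mul_sub,
      sub_mul, smul_mul_assoc, mul_smul_comm, mul_assoc]
  all_goals match_scalars
  all_goals field_simp
  all_goals try ring
  all_goals try field_simp
  all_goals try ring

theorem t15 : br q c (br (q ^ 3) c (br (q ^ 3) d c)) = 0 := by
  rw [t14 q hq c d h, brz1]

theorem t26 : br (q ^ 6) d (br (q ^ 3) c (br q c d)) = 0 := by
  simp only [br, h, habx q hq c d h, smul_sub, sub_smul, smul_smul, mul_sub,
      sub_mul, smul_mul_assoc, mul_smul_comm, mul_assoc]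
  all_goals match_scalars
  all_goals field_simp
  all_goals try ring
  all_goals try field_simp
  all_goals try ring

theorem t37 : br q (br (q ^ 3) (br (q ^ 3) c d) c) c = 0 := by
  rw [t47 q hq c d h, brz2]

theorem t16 : br (q ^ 3) d (br q c (br (q ^ 3) c (br (q ^ 3) d c))) = 0 := by
  rw [t15 q hq c d h, brz1]

theorem t27 : br (q ^ 3) (br q (br (q ^ 3) (br (q ^ 3) c d) c) c) d = 0 := by
  rw [t37 q hq c d h, brz2]

theorem t17 : br q c (br (q ^ 3) d (br q c (br (q ^ 3) c (br (q ^ 3) d c)))) = 0 := by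
  rw [t16 q hq c d h, brz1]

end Abstract
end G2Shapovalov

namespace G2Shapovalov

/-- The images of the Shapovalov matrix entries `f_ij` in `U⁻/J`. -/
theorem fij_mod_J (q : ℂ) (hq : q ≠ 0) (hroot : ∀ n : ℕ, 0 < n → q ^ n ≠ 1) :
    π q (f24 q) = (q⁻¹ ^ 3 - q ^ 3) • (π q (b q) * π q (a q)) ∧
    π q (f57 q) = (q⁻¹ ^ 3 - q ^ 3) • (π q (b q) * π q (a q)) ∧
    π q (f35 q) = ((q⁻¹ ^ 2 - 1) / (q + q⁻¹)) • (π q (a q) ^ 2) ∧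
    π q (f25 q) = ((q⁻¹ ^ 3 - q) * (q⁻¹ ^ 3 - q ^ 3) / (q + q⁻¹) ^ 2) •
      (π q (b q) * π q (a q) ^ 2) ∧
    π q (f13 q) = 0 ∧ π q (f46 q) = 0 ∧ π q (f14 q) = 0 ∧ π q (f47 q) = 0 ∧
    π q (f15 q) = 0 ∧ π q (f26 q) = 0 ∧ π q (f36 q) = 0 ∧ π q (f37 q) = 0 ∧
    π q (f16 q) = 0 ∧ π q (f27 q) = 0 ∧ π q (f17 q) = 0 := by
  have hab : π q (a q) * π q (b q) = q⁻¹ ^ 3 • (π q (b q) * π q (a q)) := by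
    have hrel := RingQuot.mkAlgHom_rel ℂ (JRel.rel (q := q))
    simpa [π, map_mul, map_smul] using hrel
  have hbr : ∀ (p : ℂ) (x y : Um q), π q (br p x y) = br p (π q x) (π q y) := by
    intro p x y
    simp [br, map_sub, map_mul, map_smul]
  set c := π q (a q) with hc
  set d := π q (b q) with hd
  refine ⟨?_, ?_, ?_, ?_, ?_, ?_, ?_, ?_, ?_, ?_, ?_, ?_, ?_, ?_, ?_⟩
  · rw [f24, hbr, t24 q hq c d hab]
  · rw [f57, hbr, t24 q hq c d hab]
  · rw [f35, map_smul, hbr, t35 q hq c d hab, smul_smul]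
    congr 1
    · rw [div_eq_mul_inv]
      have h2 : q⁻¹ ^ 2 * (1 - q ^ 2) = q⁻¹ ^ 2 - 1 := by field_simp
      linear_combination (q + q⁻¹)⁻¹ * h2
    · rw [sq]
  · rw [f25, map_smul, hbr, hbr, t25 q hq c d hab, smul_smul]
    congr 1
    · rw [div_eq_mul_inv]
      ring
    · rw [sq]
  · rw [f13, hbr, t13 q hq c d hab]
  · rw [f46, hbr, t13 q hq c d hab]
  · simp only [f14, map_smul, hbr]
    rw [t14 q hq c d hab, smul_zero]
  · simp only [f47, map_smul, hbr]
    rw [t47 q hq c d hab, smul_zero]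
  · simp only [f15, map_smul, hbr]
    rw [t15 q hq c d hab, smul_zero]
  · simp only [f26, map_smul, hbr]
    rw [t26 q hq c d hab, smul_zero]
  · simp only [f36, map_smul, hbr]
    rw [t36 q hq c d hab, smul_zero]
  · simp only [f37, map_smul, hbr]
    rw [t37 q hq c d hab, smul_zero]
  · simp only [f16, map_smul, hbr]
    rw [t16 q hq c d hab, smul_zero]
  · simp only [f27, map_smul, hbr]
    rw [t27 q hq c d hab, smul_zero]
  · simp only [f17, map_smul, hbr]
    rw [t17 q hq c d hab, smul_zero]

end G2Shapovalov
end
end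

section
/- Let q ∈ ℂ be nonzero and not a root of unity, and let U⁻, J, f_ij, Ā_k and ǧ_ij be as in the context. Then in (U⁻/J)[y₂, y₃] the image of ǧ₁₄ = f₁₄Ā₂Ā₃ + f₁₂f₂₄Ā₃ + f₁₃f₃₄Ā₂ + f₁₂f₂₃f₃₄ equals [3]_q · y₃ · aba. -/
noncomputable section

namespace G2Shapovalov

open Polynomial

/-- The two-variable polynomial ring `(y₂ = C X`, `y₃ = X)`. -/
abbrev P2 (R : Type) [Ring R] : Type := Polynomial (Polynomial R)

/-- `Ā₂ = (1 − y₂)/(q − q⁻¹)` in `U⁻[y₂, y₃]`. -/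
def Abar₂ (q : ℂ) : P2 (Um q) := (q - q⁻¹)⁻¹ • (1 - C X)

/-- `Ā₃ = (1 − y₃)/(q − q⁻¹)` in `U⁻[y₂, y₃]`. -/
def Abar₃ (q : ℂ) : P2 (Um q) := (q - q⁻¹)⁻¹ • ((1 : P2 (Um q)) - X)

/-- `ǧ₁₄ = f₁₄Ā₂Ā₃ + f₁₂f₂₄Ā₃ + f₁₃f₃₄Ā₂ + f₁₂f₂₃f₃₄` in `U⁻[y₂, y₃]`. -/
def g14 (q : ℂ) : P2 (Um q) :=
  C (C (f14 q)) * Abar₂ q * Abar₃ q + C (C (f12 q * f24 q)) * Abar₃ q +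
    C (C (f13 q * f34 q)) * Abar₂ q + C (C (f12 q * f23 q * f34 q))

/-- The coefficientwise quotient map `U⁻[y₂,y₃] → (U⁻/J)[y₂,y₃]`. -/
def Φ₂ (q : ℂ) : P2 (Um q) →+* P2 (UmJ q) :=
  Polynomial.mapRingHom (Polynomial.mapRingHom (π q).toRingHom)

/-!
Modulo `J` we have `ab = q⁻³ba`, so `[b,a]_{q³}` vanishes and with it `f₁₃` and `f₁₄`, while
`f₂₄ = [a,b]_{q³}` becomes `(q⁻³ - q³)ba`. As `q⁻³ - q³ = -(q - q⁻¹)[3]_q`, the term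
`f₁₂f₂₄Ā₃` becomes `-[3]_q(1 - y₃)aba`, and adding `f₁₂f₂₃f₃₄ = [3]_q aba` leaves `[3]_q y₃ aba`.
-/

section DeformedCommutator

variable {R : Type} [Ring R] [Algebra ℂ R]

lemma br_zero_right (p : ℂ) (x : R) : br p x 0 = 0 := by
  simp [br]

lemma br_eq_smul_of_mul_eq_smul {p c : ℂ} {x y : R} (h : x * y = c • (y * x)) :
    br p x y = (c - p) • (y * x) := by
  rw [br, h, sub_smul]

lemma map_br {S G : Type} [Ring S] [Algebra ℂ S] [FunLike G R S] [AlgHomClass G ℂ R S]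
    (φ : G) (p : ℂ) (x y : R) :
    φ (br p x y) = br p (φ x) (φ y) := by
  simp [br]

end DeformedCommutator

lemma π_a_mul_π_b (q : ℂ) : π q (a q) * π q (b q) = q⁻¹ ^ 3 • (π q (b q) * π q (a q)) := by
  simpa [π] using RingQuot.mkAlgHom_rel ℂ (JRel.rel (q := q))

lemma π_b_mul_π_a {q : ℂ} (hq : q ≠ 0) :
    π q (b q) * π q (a q) = q ^ 3 • (π q (a q) * π q (b q)) := by
  rw [π_a_mul_π_b, smul_smul, ← mul_pow, mul_inv_cancel₀ hq, one_pow, one_smul]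

lemma π_f13 {q : ℂ} (hq : q ≠ 0) : π q (f13 q) = 0 := by
  rw [f13, map_br, br_eq_smul_of_mul_eq_smul (π_b_mul_π_a hq), sub_self, zero_smul]

lemma π_f14 {q : ℂ} (hq : q ≠ 0) : π q (f14 q) = 0 := by
  rw [f14, map_smul, map_br, ← f13, π_f13 hq, br_zero_right, smul_zero]

lemma π_f12_mul_f24 (q : ℂ) :
    π q (f12 q * f24 q) = (q⁻¹ ^ 3 - q ^ 3) • (π q (a q) * π q (b q) * π q (a q)) := by
  rw [map_mul, f12, f24, map_br, br_eq_smul_of_mul_eq_smul (π_a_mul_π_b q),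
    mul_smul_comm, mul_assoc]

lemma π_f12_mul_f23_mul_f34 (q : ℂ) :
    π q (f12 q * f23 q * f34 q) =
      (q ^ 2 + 1 + q⁻¹ ^ 2) • (π q (a q) * π q (b q) * π q (a q)) := by
  rw [map_mul, map_mul, f12, f23, f34, map_smul, mul_smul_comm, smul_mul_assoc]

open Polynomial

lemma Φ₂_C_C (q : ℂ) (u : Um q) : Φ₂ q (C (C u)) = C (C (π q u)) := by
  simp [Φ₂]

lemma Φ₂_smul (q c : ℂ) (f : P2 (Um q)) : Φ₂ q (c • f) = c • Φ₂ q f :=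
  map_smul (mapAlgHom (mapAlgHom (π q))) c f

lemma Φ₂_Abar₃ (q : ℂ) : Φ₂ q (Abar₃ q) = (q - q⁻¹)⁻¹ • (1 - X) := by
  rw [Abar₃, Φ₂_smul, map_sub, map_one]
  simp [Φ₂]

lemma sub_inv_ne_zero_of_sq_ne_one {K : Type*} [Field K] {q : K} (hq : q ≠ 0) (hq2 : q ^ 2 ≠ 1) :
    q - q⁻¹ ≠ 0 := by
  rw [sub_ne_zero]
  contrapose! hq2
  rw [sq]
  nth_rw 2 [hq2]
  exact mul_inv_cancel₀ hq

theorem g14_mod_J (q : ℂ) (hq : q ≠ 0) (hroot : ∀ n : ℕ, 0 < n → q ^ n ≠ 1) :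
    Φ₂ q (g14 q) = (q ^ 2 + 1 + q⁻¹ ^ 2) •
      ((X : P2 (UmJ q)) * C (C (π q (a q) * π q (b q) * π q (a q)))) := by
  have hs : q - q⁻¹ ≠ 0 := sub_inv_ne_zero_of_sq_ne_one hq (hroot 2 two_pos)
  have hcoeff : q⁻¹ ^ 3 - q ^ 3 = -(q ^ 2 + 1 + q⁻¹ ^ 2) * (q - q⁻¹) := by
    field_simp
    ring
  simp only [g14, map_add, map_mul (Φ₂ q), Φ₂_C_C, π_f14 hq, map_mul (π q) (f13 q), π_f13 hq,
    π_f12_mul_f24, π_f12_mul_f23_mul_f34, Φ₂_Abar₃, zero_mul, map_zero, zero_add, add_zero]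
  rw [hcoeff, ← smul_C, ← smul_C, ← smul_C, ← smul_C, smul_mul_smul_comm, mul_inv_cancel_right₀ hs,
    X_mul, mul_sub, mul_one]
  module

end G2Shapovalov
end
end

section
/- Let q ∈ ℂ be nonzero and not a root of unity, let m be a positive integer, and let u, v be nonzero complex numbers such that u^{2c}·v^{2d} ≠ 1 for every (c,d) ∈ Γ. Then χ_m(u⁻¹, u³v) = χ_m(u,v) and χ_m(uv, v⁻¹) = χ_m(u,v) (all three quantities being well-defined). -/
/-!
Invariance of the central character values `χ_λ(τ^m)` of `ℂ_q[G₂]` under the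
shifted action of the Weyl group of `G₂`, expressed in the torus coordinates
`u = q^{(λ+ρ,α)}`, `v = q^{(λ+ρ,β)}`.
-/

noncomputable section

namespace G2Char

/-- The `G₂` inner product on `ℤ²` in the basis of simple roots `(α, β)`. -/
def inner (c d : ℤ × ℤ) : ℤ := 2 * c.1 * d.1 - 3 * (c.1 * d.2 + c.2 * d.1) + 6 * c.2 * d.2

/-- The positive roots of `G₂`. -/
def Γ : List (ℤ × ℤ) := [(1, 0), (0, 1), (1, 1), (2, 1), (3, 1), (3, 2)]

/-- The weights of the 7-dimensional representation of `G₂`. -/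
def N : List (ℤ × ℤ) := [(2, 1), (1, 1), (1, 0), (0, 0), (-1, 0), (-1, -1), (-2, -1)]

/-- The central character value `χ_m(u,v)`, equal (up to the constant `q^{8m}`) to
`χ_λ(τ^m)` where `u = q^{(λ+ρ,α)}`, `v = q^{(λ+ρ,β)}`. -/
def χ (q u v : ℂ) (m : ℕ) : ℂ :=
  (N.map fun ν =>
    (q ^ inner ν ν * u ^ (2 * ν.1) * v ^ (2 * ν.2)) ^ m *
      (Γ.map fun γ =>
        (q ^ inner ν γ * u ^ γ.1 * v ^ γ.2 - q ^ (-inner ν γ) * u ^ (-γ.1) * v ^ (-γ.2)) /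
          (u ^ γ.1 * v ^ γ.2 - u ^ (-γ.1) * v ^ (-γ.2))).prod).sum

/-!
Writing `x^γ = u^{γ₁} v^{γ₂}`, both substitutions are of the form `x^γ ↦ x^{σγ}`, where `σ` is the
corresponding simple reflection acting on root coordinates. As `σ` is an isometry of `⟨·,·⟩`, the
summand of `χ` indexed by `ν` at the substituted point is the summand indexed by `σν` at `(u, v)`,
except that its root factors run over `σΓ`. Each root factor is even in `γ` and `σ` permutes the
roots up to sign, so the product is unchanged; finally `σ` permutes the weights `N`.
-/

def mono (u v : ℂ) (γ : ℤ × ℤ) : ℂ := u ^ γ.1 * v ^ γ.2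

def rootFactor (q u v : ℂ) (μ γ : ℤ × ℤ) : ℂ :=
  (q ^ inner μ γ * mono u v γ - q ^ (-inner μ γ) * mono u v (-γ)) /
    (mono u v γ - mono u v (-γ))

def term (q u v : ℂ) (m : ℕ) (ν : ℤ × ℤ) : ℂ :=
  (q ^ inner ν ν * mono u v ((2 : ℤ) • ν)) ^ m * (Γ.map (rootFactor q u v ν)).prod

theorem χ_eq_sum_term (q u v : ℂ) (m : ℕ) : χ q u v m = (N.map (term q u v m)).sum := by
  simp only [χ, mul_assoc]
  rfl

theorem inner_neg_right (c d : ℤ × ℤ) : inner c (-d) = -inner c d := by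
  simp only [inner, Prod.fst_neg, Prod.snd_neg]
  ring

theorem rootFactor_neg (q u v : ℂ) (μ γ : ℤ × ℤ) :
    rootFactor q u v μ (-γ) = rootFactor q u v μ γ := by
  simp only [rootFactor, inner_neg_right, neg_neg]
  rw [← neg_div_neg_eq, neg_sub, neg_sub]

section Substitution

variable {s : ℤ × ℤ →+ ℤ × ℤ} {q u v u' v' : ℂ}

theorem rootFactor_eq_of_mono_eq (hs : ∀ c d, inner (s c) (s d) = inner c d)
    (hmono : ∀ γ, mono u' v' γ = mono u v (s γ)) (μ γ : ℤ × ℤ) :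
    rootFactor q u' v' μ γ = rootFactor q u v (s μ) (s γ) := by
  simp only [rootFactor, hmono, hs, map_neg]

theorem term_eq_of_mono_eq (hs : ∀ c d, inner (s c) (s d) = inner c d)
    (hΓ : ∀ f : ℤ × ℤ → ℂ, (∀ γ, f (-γ) = f γ) → (Γ.map (f ∘ s)).prod = (Γ.map f).prod)
    (hmono : ∀ γ, mono u' v' γ = mono u v (s γ)) (m : ℕ) (ν : ℤ × ℤ) :
    term q u' v' m ν = term q u v m (s ν) := by
  have hroots : (Γ.map (rootFactor q u' v' ν)).prod = (Γ.map (rootFactor q u v (s ν))).prod := by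
    rw [← hΓ _ (rootFactor_neg q u v (s ν))]
    exact congrArg List.prod (List.map_congr_left fun γ _ => rootFactor_eq_of_mono_eq hs hmono ν γ)
  rw [term, term, hroots, hmono, hs, map_zsmul]

theorem χ_eq_of_mono_eq (hs : ∀ c d, inner (s c) (s d) = inner c d)
    (hΓ : ∀ f : ℤ × ℤ → ℂ, (∀ γ, f (-γ) = f γ) → (Γ.map (f ∘ s)).prod = (Γ.map f).prod)
    (hN : (N.map s).Perm N) (hmono : ∀ γ, mono u' v' γ = mono u v (s γ)) (m : ℕ) :
    χ q u' v' m = χ q u v m := by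
  rw [χ_eq_sum_term, χ_eq_sum_term,
    List.map_congr_left fun ν _ => term_eq_of_mono_eq hs hΓ hmono m ν,
    ← (hN.map (term q u v m)).sum_eq, List.map_map]
  rfl

end Substitution

def reflα : ℤ × ℤ →+ ℤ × ℤ :=
  AddMonoidHom.mk' (fun c => (3 * c.2 - c.1, c.2)) fun c d =>
    Prod.ext (by simp only [Prod.fst_add, Prod.snd_add]; ring) rfl

def reflβ : ℤ × ℤ →+ ℤ × ℤ :=
  AddMonoidHom.mk' (fun c => (c.1, c.1 - c.2)) fun c d =>
    Prod.ext rfl (by simp only [Prod.fst_add, Prod.snd_add]; ring)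

theorem inner_reflα (c d : ℤ × ℤ) : inner (reflα c) (reflα d) = inner c d := by
  simp only [reflα, inner, AddMonoidHom.mk'_apply]
  ring

theorem inner_reflβ (c d : ℤ × ℤ) : inner (reflβ c) (reflβ d) = inner c d := by
  simp only [reflβ, inner, AddMonoidHom.mk'_apply]
  ring

theorem perm_N_map_reflα : (N.map reflα).Perm N := by decide

theorem perm_N_map_reflβ : (N.map reflβ).Perm N := by decide

theorem prod_Γ_map_reflα {M : Type*} [CommMonoid M] (f : ℤ × ℤ → M) (hf : ∀ γ, f (-γ) = f γ) :
    (Γ.map (f ∘ reflα)).prod = (Γ.map f).prod := by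
  simp only [Γ, List.map_cons, List.map_nil, List.prod_cons, List.prod_nil, Function.comp_apply,
    reflα, AddMonoidHom.mk'_apply]
  norm_num
  rw [show ((-1, 0) : ℤ × ℤ) = -(1, 0) from rfl, hf]
  ac_rfl

theorem prod_Γ_map_reflβ {M : Type*} [CommMonoid M] (f : ℤ × ℤ → M) (hf : ∀ γ, f (-γ) = f γ) :
    (Γ.map (f ∘ reflβ)).prod = (Γ.map f).prod := by
  simp only [Γ, List.map_cons, List.map_nil, List.prod_cons, List.prod_nil, Function.comp_apply,
    reflβ, AddMonoidHom.mk'_apply]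
  norm_num
  rw [show ((0, -1) : ℤ × ℤ) = -(0, 1) from rfl, hf]
  ac_rfl

theorem mono_inv_pow_three_mul {u : ℂ} (hu : u ≠ 0) (v : ℂ) (γ : ℤ × ℤ) :
    mono u⁻¹ (u ^ 3 * v) γ = mono u v (reflα γ) := by
  simp only [mono, reflα, AddMonoidHom.mk'_apply]
  rw [inv_zpow', mul_zpow, ← mul_assoc, zpow_sub₀ hu, zpow_mul, zpow_ofNat, zpow_neg]
  ring

theorem mono_mul_inv (u : ℂ) {v : ℂ} (hv : v ≠ 0) (γ : ℤ × ℤ) :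
    mono (u * v) v⁻¹ γ = mono u v (reflβ γ) := by
  simp only [mono, reflβ, AddMonoidHom.mk'_apply]
  rw [inv_zpow', mul_zpow, mul_assoc, zpow_sub₀ hv, zpow_neg]
  ring

theorem chi_weyl_invariant_general (q : ℂ) (m : ℕ) (u v : ℂ) (hu : u ≠ 0) (hv : v ≠ 0) :
    χ q u⁻¹ (u ^ 3 * v) m = χ q u v m ∧ χ q (u * v) v⁻¹ m = χ q u v m :=
  ⟨χ_eq_of_mono_eq inner_reflα prod_Γ_map_reflα perm_N_map_reflα (mono_inv_pow_three_mul hu v) m,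
    χ_eq_of_mono_eq inner_reflβ prod_Γ_map_reflβ perm_N_map_reflβ (mono_mul_inv u hv) m⟩

theorem chi_weyl_invariant (q : ℂ) (hq : q ≠ 0) (hroot : ∀ n : ℕ, 0 < n → q ^ n ≠ 1)
    (m : ℕ) (hm : 0 < m) (u v : ℂ) (hu : u ≠ 0) (hv : v ≠ 0)
    (hreg : ∀ γ ∈ Γ, u ^ (2 * γ.1) * v ^ (2 * γ.2) ≠ 1) :
    χ q u⁻¹ (u ^ 3 * v) m = χ q u v m ∧ χ q (u * v) v⁻¹ m = χ q u v m :=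
  chi_weyl_invariant_general q m u v hu hv

end G2Char
end
end
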